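/- arXiv:1802.06132 — 2 statements merged into one kernel-verified Lean document; each statement's English description precedes it below -/
import Mathlib

section
/- With J, S, R₁, R₂ as above, R₁R₁ᵀ = diag((I + (I-4η²CCᵀ)^{1/2})/2, (I + (I-4η²CᵀC)^{1/2})/2) and R₂R₂ᵀ = diag((I - (I-4η²CCᵀ)^{1/2})/2, (I - (I-4η²CᵀC)^{1/2})/2). -/
open Matrix
noncomputable section

/-- Largest eigenvalue (for symmetric matrices: sup of real spectrum). -/
def lamMax {n : Type*} [Fintype n] [DecidableEq n] (M : Matrix n n ℝ) : ℝ :=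
  sSup (spectrum ℝ M)

/-- Smallest eigenvalue (for symmetric matrices: inf of real spectrum). -/
def lamMin {n : Type*} [Fintype n] [DecidableEq n] (M : Matrix n n ℝ) : ℝ :=
  sInf (spectrum ℝ M)

/-- Operator (spectral) norm of a square real matrix. -/
def opNorm {n : Type*} [Fintype n] [DecidableEq n] (M : Matrix n n ℝ) : ℝ :=
  ‖toEuclideanCLM (𝕜 := ℝ) M‖

open Classical in
/-- Positive semidefinite square root (junk value `0` if `M` is not PSD). -/
def msqrt {n : Type*} [Fintype n] [DecidableEq n] (M : Matrix n n ℝ) : Matrix n n ℝ :=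
  if h : M.PosSemidef then
    (h.1.eigenvectorUnitary : Matrix n n ℝ) * diagonal (Real.sqrt ∘ h.1.eigenvalues) *
      (star h.1.eigenvectorUnitary : Matrix n n ℝ) else 0

/-! Put `K = 2ηJ`. Then `K² = -4η² diag(CCᵀ, CᵀC)`, so `S` is the positive square root of
`1 + K²`: it is symmetric, squares to `1 + K²`, and commutes with `K` because `1 + K²` does.
Since `Kᵀ = -K`, these facts give `(1 - K ± S)(1 - K ± S)ᵀ = (1 - K ± S)(1 + K ± S) = 2(1 ± S)`.
The diagonal blocks of `1 + K²` are positive semidefinite because `4η²λ_max(CCᵀ) ≤ 1`, and the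
nonzero spectrum of `CᵀC` is that of `CCᵀ`. -/

open scoped MatrixOrder

lemma le_lamMax_of_mem_spectrum {n : Type*} [Fintype n] [DecidableEq n] {M : Matrix n n ℝ}
    {x : ℝ} (hx : x ∈ spectrum ℝ M) : x ≤ lamMax M :=
  le_csSup M.finite_spectrum.bddAbove hx

lemma spectrum.mem_mul_comm_of_ne_zero {𝕜 A : Type*} [Field 𝕜] [Ring A] [Algebra 𝕜 A]
    {a b : A} {x : 𝕜} (hx : x ∈ spectrum 𝕜 (a * b)) (h0 : x ≠ 0) : x ∈ spectrum 𝕜 (b * a) :=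
  ((spectrum.nonzero_mul_comm a b).subset (Set.mem_sdiff_singleton.mpr ⟨hx, h0⟩)).1

lemma one_sub_add_mul_one_add_add {R : Type*} [Ring R] {J S : R} (hSJ : Commute S J)
    (hSS : S * S = 1 + J * J) : (1 - J + S) * (1 + J + S) = 2 * (1 + S) := by
  have expand : (1 - J + S) * (1 + J + S) =
      2 * (1 + S) + (S * S - 1 - J * J) + (S * J - J * S) := by noncomm_ring
  rw [expand, hSS, hSJ.eq]
  abel

namespace Matrix

section Square

variable {n : Type*} [Fintype n] [DecidableEq n]

lemma posSemidef_one_sub_smul {N : Matrix n n ℝ} (hN : N.IsHermitian) {c : ℝ}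
    (h : ∀ x ∈ spectrum ℝ N, c * x ≤ 1) : (1 - c • N).PosSemidef := by
  have hN' : IsSelfAdjoint N := hN
  rw [← nonneg_iff_posSemidef, sub_nonneg, ← cfc_const_mul_id c N, ← map_one (algebraMap ℝ _)]
  exact (cfc_le_algebraMap_iff _ _ N).mpr h

lemma transpose_sqrt (M : Matrix n n ℝ) : (CFC.sqrt M)ᵀ = CFC.sqrt M := by
  rw [← conjTranspose_eq_transpose_of_trivial]
  exact (CFC.sqrt_nonneg M).posSemidef.1

lemma half_smul_one_sub_add_mul_transpose {J S : Matrix n n ℝ} (hJ : Jᵀ = -J) (hS : Sᵀ = S)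
    (hSJ : Commute S J) (hSS : S * S = 1 + J * J) :
    ((1 / 2 : ℝ) • (1 - J + S)) * ((1 / 2 : ℝ) • (1 - J + S))ᵀ = (1 / 2 : ℝ) • (1 + S) := by
  have hT : (1 - J + S)ᵀ = 1 + J + S := by simp [hJ, hS, sub_eq_add_neg]
  rw [transpose_smul, hT, smul_mul_smul_comm, one_sub_add_mul_one_add_add hSJ hSS, two_mul]
  module

lemma half_smul_mul_transpose_of_eq_sqrt {K S : Matrix n n ℝ} (hK : Kᵀ = -K)
    (hpos : 0 ≤ 1 + K * K) (hS : S = CFC.sqrt (1 + K * K)) :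
    ((1 / 2 : ℝ) • (1 - K + S)) * ((1 / 2 : ℝ) • (1 - K + S))ᵀ = (1 / 2 : ℝ) • (1 + S) ∧
    ((1 / 2 : ℝ) • (1 - K - S)) * ((1 / 2 : ℝ) • (1 - K - S))ᵀ = (1 / 2 : ℝ) • (1 - S) := by
  have hSt : Sᵀ = S := hS ▸ transpose_sqrt _
  have hSK : Commute S K := by
    rw [hS, CFC.sqrt_eq_cfc]
    exact Commute.cfc_nnreal ((Commute.one_left K).add_left ((Commute.refl K).mul_left rfl)) _
  have hSS : S * S = 1 + K * K := hS ▸ CFC.sqrt_mul_sqrt_self _ hpos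
  refine ⟨half_smul_one_sub_add_mul_transpose hK hSt hSK hSS, ?_⟩
  simpa only [← sub_eq_add_neg] using half_smul_one_sub_add_mul_transpose (S := -S) hK
    (by rw [transpose_neg, hSt]) hSK.neg_left (by rw [neg_mul_neg, hSS])

lemma posSemidef_one_sub_smul_mul_transpose {C : Matrix n n ℝ} {c : ℝ} (hc : 0 ≤ c)
    (h : c * lamMax (C * Cᵀ) ≤ 1) :
    (1 - c • (C * Cᵀ)).PosSemidef ∧ (1 - c • (Cᵀ * C)).PosSemidef := by
  have hCCt : ∀ x ∈ spectrum ℝ (C * Cᵀ), c * x ≤ 1 := fun x hx =>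
    (mul_le_mul_of_nonneg_left (le_lamMax_of_mem_spectrum hx) hc).trans h
  have hCtC : ∀ x ∈ spectrum ℝ (Cᵀ * C), c * x ≤ 1 := by
    intro x hx
    rcases eq_or_ne x 0 with rfl | hx0
    · simp
    · exact hCCt x (spectrum.mem_mul_comm_of_ne_zero hx hx0)
  exact ⟨posSemidef_one_sub_smul (isHermitian_mul_conjTranspose_self C) hCCt,
    posSemidef_one_sub_smul (isHermitian_conjTranspose_mul_self C) hCtC⟩

end Square

section Blocks

variable {m n : Type*}

lemma fromBlocks_sub {l o α : Type*} [Sub α] (A A' : Matrix l m α) (B B' : Matrix l n α)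
    (C C' : Matrix o m α) (D D' : Matrix o n α) :
    fromBlocks A B C D - fromBlocks A' B' C' D' =
      fromBlocks (A - A') (B - B') (C - C') (D - D') := by
  ext (i | i) (j | j) <;> rfl

lemma transpose_fromBlocks_skew (C : Matrix m n ℝ) :
    (fromBlocks 0 C (-Cᵀ) 0)ᵀ = -fromBlocks 0 C (-Cᵀ) 0 := by
  simp [fromBlocks_transpose, fromBlocks_neg]

variable [Fintype m] [Fintype n] [DecidableEq m] [DecidableEq n]

lemma one_add_smul_fromBlocks_skew_mul_self (t : ℝ) (C : Matrix m n ℝ) :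
    1 + (t • fromBlocks 0 C (-Cᵀ) 0) * (t • fromBlocks 0 C (-Cᵀ) 0) =
      fromBlocks (1 - t ^ 2 • (C * Cᵀ)) 0 0 (1 - t ^ 2 • (Cᵀ * C)) := by
  rw [smul_mul_smul_comm, fromBlocks_multiply, ← fromBlocks_one, fromBlocks_smul, fromBlocks_add]
  simp [sq, sub_eq_add_neg]

lemma PosSemidef.fromBlocks_zero {A : Matrix m m ℝ} {B : Matrix n n ℝ} (hA : A.PosSemidef)
    (hB : B.PosSemidef) : (fromBlocks A 0 0 B).PosSemidef := by
  obtain ⟨X, rfl⟩ : ∃ X : Matrix m m ℝ, A = Xᴴ * X :=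
    ⟨CFC.sqrt A, by rw [(CFC.sqrt_nonneg A).posSemidef.1, CFC.sqrt_mul_sqrt_self A hA.nonneg]⟩
  obtain ⟨Y, rfl⟩ : ∃ Y : Matrix n n ℝ, B = Yᴴ * Y :=
    ⟨CFC.sqrt B, by rw [(CFC.sqrt_nonneg B).posSemidef.1, CFC.sqrt_mul_sqrt_self B hB.nonneg]⟩
  convert posSemidef_conjTranspose_mul_self (fromBlocks X 0 0 Y) using 1
  simp [fromBlocks_transpose, fromBlocks_multiply]

end Blocks

end Matrix

lemma msqrt_eq_sqrt {n : Type*} [Fintype n] [DecidableEq n] {M : Matrix n n ℝ}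
    (hM : M.PosSemidef) : msqrt M = CFC.sqrt M := by
  rw [CFC.sqrt_eq_real_sqrt M hM.nonneg, cfcₙ_eq_cfc, hM.1.cfc_eq, msqrt, dif_pos hM,
    IsHermitian.cfc, Unitary.conjStarAlgAut_apply]
  simp [RCLike.ofReal_real_eq_id]

lemma fromBlocks_msqrt {m n : Type*} [Fintype m] [Fintype n] [DecidableEq m] [DecidableEq n]
    {M : Matrix m m ℝ} {N : Matrix n n ℝ} (hM : M.PosSemidef) (hN : N.PosSemidef) :
    fromBlocks (msqrt M) 0 0 (msqrt N) = CFC.sqrt (fromBlocks M 0 0 N) := by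
  rw [msqrt_eq_sqrt hM, msqrt_eq_sqrt hN, eq_comm]
  refine CFC.sqrt_unique ?_ ?_
  · simp [fromBlocks_multiply, CFC.sqrt_mul_sqrt_self M hM.nonneg,
      CFC.sqrt_mul_sqrt_self N hN.nonneg]
  · exact (PosSemidef.fromBlocks_zero (CFC.sqrt_nonneg M).posSemidef
      (CFC.sqrt_nonneg N).posSemidef).nonneg

theorem stmt8_general {p : ℕ} (C : Matrix (Fin p) (Fin p) ℝ) (η : ℝ)
    (h : 4 * η ^ 2 * lamMax (C * Cᵀ) ≤ 1)
    (J S R₁ R₂ : Matrix (Fin p ⊕ Fin p) (Fin p ⊕ Fin p) ℝ)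
    (hJ : J = fromBlocks 0 C (-Cᵀ) 0)
    (hS : S = fromBlocks (msqrt (1 - (4 * η ^ 2) • (C * Cᵀ))) 0 0
      (msqrt (1 - (4 * η ^ 2) • (Cᵀ * C))))
    (hR₁ : R₁ = (1 / 2 : ℝ) • ((1 - (2 * η) • J) + S))
    (hR₂ : R₂ = (1 / 2 : ℝ) • ((1 - (2 * η) • J) - S)) :
    R₁ * R₁ᵀ = fromBlocks ((1 / 2 : ℝ) • (1 + msqrt (1 - (4 * η ^ 2) • (C * Cᵀ)))) 0 0
        ((1 / 2 : ℝ) • (1 + msqrt (1 - (4 * η ^ 2) • (Cᵀ * C)))) ∧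
    R₂ * R₂ᵀ = fromBlocks ((1 / 2 : ℝ) • (1 - msqrt (1 - (4 * η ^ 2) • (C * Cᵀ)))) 0 0
        ((1 / 2 : ℝ) • (1 - msqrt (1 - (4 * η ^ 2) • (Cᵀ * C)))) := by
  obtain ⟨hM₁, hM₂⟩ := posSemidef_one_sub_smul_mul_transpose (by positivity) h
  have hK : 1 + ((2 * η) • J) * ((2 * η) • J) =
      fromBlocks (1 - (4 * η ^ 2) • (C * Cᵀ)) 0 0 (1 - (4 * η ^ 2) • (Cᵀ * C)) := by
    rw [hJ, one_add_smul_fromBlocks_skew_mul_self, mul_pow]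
    norm_num
  have hKt : ((2 * η) • J)ᵀ = -((2 * η) • J) := by
    rw [hJ, transpose_smul, transpose_fromBlocks_skew, smul_neg]
  obtain ⟨h₁, h₂⟩ := half_smul_mul_transpose_of_eq_sqrt (S := S) hKt
    (hK ▸ (hM₁.fromBlocks_zero hM₂).nonneg) (by rw [hS, hK, fromBlocks_msqrt hM₁ hM₂])
  rw [hR₁, hR₂, h₁, h₂, hS, ← fromBlocks_one]
  simp only [fromBlocks_add, fromBlocks_sub, fromBlocks_smul, add_zero, sub_zero, smul_zero,
    and_self]

theorem stmt8 {p : ℕ} (C : Matrix (Fin p) (Fin p) ℝ) (η : ℝ) (hη : 0 < η)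
    (h : 4 * η ^ 2 * lamMax (C * Cᵀ) ≤ 1)
    (J S R₁ R₂ : Matrix (Fin p ⊕ Fin p) (Fin p ⊕ Fin p) ℝ)
    (hJ : J = fromBlocks 0 C (-Cᵀ) 0)
    (hS : S = fromBlocks (msqrt (1 - (4 * η ^ 2) • (C * Cᵀ))) 0 0
      (msqrt (1 - (4 * η ^ 2) • (Cᵀ * C))))
    (hR₁ : R₁ = (1 / 2 : ℝ) • ((1 - (2 * η) • J) + S))
    (hR₂ : R₂ = (1 / 2 : ℝ) • ((1 - (2 * η) • J) - S)) :
    R₁ * R₁ᵀ = fromBlocks ((1 / 2 : ℝ) • (1 + msqrt (1 - (4 * η ^ 2) • (C * Cᵀ)))) 0 0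
        ((1 / 2 : ℝ) • (1 + msqrt (1 - (4 * η ^ 2) • (Cᵀ * C)))) ∧
    R₂ * R₂ᵀ = fromBlocks ((1 / 2 : ℝ) • (1 - msqrt (1 - (4 * η ^ 2) • (C * Cᵀ)))) 0 0
        ((1 / 2 : ℝ) • (1 - msqrt (1 - (4 * η ^ 2) • (Cᵀ * C)))) :=
  stmt8_general C η h J S R₁ R₂ hJ hS hR₁ hR₂
end
end

section
/- Let C ∈ ℝ^{p×p} be full rank, η = 1/(2√(2λ_max(CCᵀ))), and consider the OMD dynamics θ_{t+1} = θ_t - 2ηCω_t + ηCω_{t-1}, ω_{t+1} = ω_t + 2ηCᵀθ_t - ηCᵀθ_{t-1}, with ‖(θ₀,ω₀)‖, ‖(θ₁,ω₁)‖ ≤ r. Then for all t ≥ 1, ‖(θ_t, ω_t)‖ ≤ 4√2·r·exp(-(t/16)·λ_min(CCᵀ)/λ_max(CCᵀ)). -/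
open Matrix
noncomputable section

/-!
Take a singular value decomposition `C = U Σ Vᵀ`, where `σᵢ² = dᵢ` are the eigenvalues of `CCᵀ`.
In the complex coordinates `ζᵢ = (Uᵀθ)ᵢ + i (Vᵀω)ᵢ` the dynamics decouple into the scalar
recurrences `ζ_{t+2} = (1 + 2αᵢi) ζ_{t+1} - αᵢi ζ_t` with `αᵢ = ησᵢ`, so that
`αᵢ² = dᵢ / (8 λ_max) ≤ 1/8`.
Their characteristic roots `r₁,₂ = (1 ± s)/2 + αᵢi`, `s = √(1 - 4αᵢ²)`, satisfy
`|r₁|² ≤ 1 - αᵢ² ≤ 1 - λ_min / (8 λ_max)`, `|r₂|² ≤ 1/2` and `r₁ - r₂ = s ≥ 1/√2`, so the closed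
form `(r₁ - r₂) ζ_t = r₁ᵗ (ζ₁ - r₂ζ₀) - r₂ᵗ (ζ₁ - r₁ζ₀)` gives `|ζ_t| ≤ 2√2 ρᵗ (|ζ₁| + |ζ₀|)` with
`ρ = exp (-λ_min / (16 λ_max))`. The change of coordinates is an isometry.
-/

open Complex

theorem sub_mul_eq_of_linear_recurrence {R : Type*} [CommRing R] (r₁ r₂ : R) (ζ : ℕ → R)
    (hrec : ∀ t, ζ (t + 2) = (r₁ + r₂) * ζ (t + 1) - r₁ * r₂ * ζ t) (t : ℕ) :
    (r₁ - r₂) * ζ t = r₁ ^ t * (ζ 1 - r₂ * ζ 0) - r₂ ^ t * (ζ 1 - r₁ * ζ 0) := by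
  induction t using Nat.twoStepInduction with
  | zero => ring
  | one => ring
  | more t ih₀ ih₁ =>
    rw [hrec]
    linear_combination (r₁ + r₂) * ih₁ - r₁ * r₂ * ih₀

theorem norm_sub_mul_norm_le_of_linear_recurrence {𝕜 : Type*} [NormedField 𝕜] {r₁ r₂ : 𝕜}
    {ρ : ℝ} (h₁ : ‖r₁‖ ≤ ρ) (h₂ : ‖r₂‖ ≤ ρ) (h₁' : ‖r₁‖ ≤ 1) (h₂' : ‖r₂‖ ≤ 1) (ζ : ℕ → 𝕜)
    (hrec : ∀ t, ζ (t + 2) = (r₁ + r₂) * ζ (t + 1) - r₁ * r₂ * ζ t) (t : ℕ) :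
    ‖r₁ - r₂‖ * ‖ζ t‖ ≤ 2 * ρ ^ t * (‖ζ 1‖ + ‖ζ 0‖) := by
  have hinit {r : 𝕜} (hr : ‖r‖ ≤ 1) : ‖ζ 1 - r * ζ 0‖ ≤ ‖ζ 1‖ + ‖ζ 0‖ :=
    calc ‖ζ 1 - r * ζ 0‖ ≤ ‖ζ 1‖ + ‖r‖ * ‖ζ 0‖ := (norm_sub_le _ _).trans_eq (by rw [norm_mul])
      _ ≤ ‖ζ 1‖ + ‖ζ 0‖ := by gcongr; exact mul_le_of_le_one_left (norm_nonneg _) hr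
  have hρ : 0 ≤ ρ := (norm_nonneg _).trans h₁
  rw [← norm_mul, sub_mul_eq_of_linear_recurrence r₁ r₂ ζ hrec]
  calc _ ≤ ‖r₁ ^ t * (ζ 1 - r₂ * ζ 0)‖ + ‖r₂ ^ t * (ζ 1 - r₁ * ζ 0)‖ := norm_sub_le _ _
    _ = ‖r₁‖ ^ t * ‖ζ 1 - r₂ * ζ 0‖ + ‖r₂‖ ^ t * ‖ζ 1 - r₁ * ζ 0‖ := by
        simp only [norm_mul, norm_pow]
    _ ≤ ρ ^ t * (‖ζ 1‖ + ‖ζ 0‖) + ρ ^ t * (‖ζ 1‖ + ‖ζ 0‖) := by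
        gcongr
        exacts [hinit h₂', hinit h₁']
    _ = 2 * ρ ^ t * (‖ζ 1‖ + ‖ζ 0‖) := by ring

theorem exists_roots_omd_charpoly {α : ℝ} (hα : α ^ 2 ≤ 1 / 8) : ∃ r₁ r₂ : ℂ,
    r₁ + r₂ = 1 + 2 * α * I ∧ r₁ * r₂ = α * I ∧
    1 ≤ 2 * ‖r₁ - r₂‖ ^ 2 ∧ ‖r₁‖ ^ 2 ≤ 1 - α ^ 2 ∧ ‖r₂‖ ^ 2 ≤ 1 / 2 := by
  set s := √(1 - 4 * α ^ 2)
  have hs : s ^ 2 = 1 - 4 * α ^ 2 := Real.sq_sqrt (by linarith)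
  have hs0 : 0 ≤ s := Real.sqrt_nonneg _
  have hnorm (a : ℝ) : ‖(a : ℂ) + α * I‖ ^ 2 = a ^ 2 + α ^ 2 := by
    rw [Complex.sq_norm, normSq_add_mul_I]
  refine ⟨(1 + s) / 2 + α * I, (1 - s) / 2 + α * I, by ring, ?_, ?_, ?_, ?_⟩
  · have hsC : (s : ℂ) ^ 2 = 1 - 4 * α ^ 2 := by exact_mod_cast hs
    linear_combination (α : ℂ) ^ 2 * I_sq - hsC / 4
  · rw [show (1 + s) / 2 + α * I - ((1 - s) / 2 + α * I) = (s : ℂ) by ring, norm_real,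
      Real.norm_eq_abs, sq_abs]
    linarith
  · have h := hnorm ((1 + s) / 2)
    push_cast at h
    nlinarith
  · have h := hnorm ((1 - s) / 2)
    push_cast at h
    nlinarith

theorem norm_le_of_omd_recurrence {α ρ : ℝ} (hα : α ^ 2 ≤ 1 / 8) (hρ : 0 ≤ ρ)
    (hρ₁ : 1 - α ^ 2 ≤ ρ ^ 2) (hρ₂ : 1 / 2 ≤ ρ ^ 2) (ζ : ℕ → ℂ)
    (hrec : ∀ t, ζ (t + 2) = (1 + 2 * α * I) * ζ (t + 1) - α * I * ζ t) (t : ℕ) :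
    ‖ζ t‖ ≤ 2 * √2 * ρ ^ t * (‖ζ 1‖ + ‖ζ 0‖) := by
  obtain ⟨r₁, r₂, hsum, hprod, hdiff, hr₁, hr₂⟩ := exists_roots_omd_charpoly hα
  have hle {r : ℂ} {c : ℝ} (h : ‖r‖ ^ 2 ≤ c) (hc : c ≤ ρ ^ 2) : ‖r‖ ≤ ρ :=
    (pow_le_pow_iff_left₀ (norm_nonneg r) hρ two_ne_zero).mp (h.trans hc)
  have hle_one {r : ℂ} {c : ℝ} (h : ‖r‖ ^ 2 ≤ c) (hc : c ≤ 1) : ‖r‖ ≤ 1 :=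
    (sq_le_one_iff₀ (norm_nonneg r)).mp (h.trans hc)
  have hbound := norm_sub_mul_norm_le_of_linear_recurrence (hle hr₁ hρ₁) (hle hr₂ hρ₂)
    (hle_one hr₁ (by nlinarith)) (hle_one hr₂ (by norm_num)) ζ
    (fun t => by rw [hrec, hsum, hprod]) t
  have hsep : 1 ≤ √2 * ‖r₁ - r₂‖ := by
    rw [← Real.sqrt_sq (norm_nonneg (r₁ - r₂)), ← Real.sqrt_mul zero_le_two]
    exact Real.one_le_sqrt.mpr hdiff
  calc ‖ζ t‖ ≤ √2 * ‖r₁ - r₂‖ * ‖ζ t‖ := le_mul_of_one_le_left (norm_nonneg _) hsep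
    _ ≤ √2 * (2 * ρ ^ t * (‖ζ 1‖ + ‖ζ 0‖)) := by
        rw [mul_assoc]; gcongr
    _ = 2 * √2 * ρ ^ t * (‖ζ 1‖ + ‖ζ 0‖) := by ring

theorem omd_recurrence_complex {α : ℝ} {x y : ℕ → ℝ}
    (hx : ∀ t, x (t + 2) = x (t + 1) - 2 * α * y (t + 1) + α * y t)
    (hy : ∀ t, y (t + 2) = y (t + 1) + 2 * α * x (t + 1) - α * x t) (t : ℕ) :
    (x (t + 2) + y (t + 2) * I : ℂ) =
      (1 + 2 * α * I) * (x (t + 1) + y (t + 1) * I) - α * I * (x t + y t * I) := by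
  rw [hx, hy]
  push_cast
  linear_combination (α * y t - 2 * α * y (t + 1) : ℂ) * I_sq

theorem norm_le_exp_of_omd_recurrence {lmin lmax d η : ℝ} (hd : 0 < d) (hmin : lmin ≤ d)
    (hmax : d ≤ lmax) (hη : η = 1 / (2 * √(2 * lmax))) (ζ : ℕ → ℂ)
    (hrec : ∀ t, ζ (t + 2) = (1 + 2 * ↑(η * √d) * I) * ζ (t + 1) - ↑(η * √d) * I * ζ t)
    (t : ℕ) :
    ‖ζ t‖ ≤ 2 * √2 * Real.exp (-(lmin / lmax) / 16) ^ t * (‖ζ 1‖ + ‖ζ 0‖) := by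
  have hlmax : 0 < lmax := hd.trans_le hmax
  have hα : (η * √d) ^ 2 = d / lmax / 8 := by
    rw [hη, mul_pow, div_pow, mul_pow, Real.sq_sqrt (by positivity), Real.sq_sqrt hd.le]
    ring
  have hratio : lmin / lmax ≤ d / lmax := by gcongr
  have hρ : Real.exp (-(lmin / lmax) / 16) ^ 2 = Real.exp (-(lmin / lmax) / 8) := by
    rw [← Real.exp_nat_mul]; ring_nf
  have hd1 : d / lmax ≤ 1 := (div_le_one hlmax).mpr hmax
  have hexp := Real.add_one_le_exp (-(lmin / lmax) / 8)
  refine norm_le_of_omd_recurrence ?_ (Real.exp_pos _).le ?_ ?_ ζ hrec t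
  · rw [hα]; linarith
  · rw [hα, hρ]; linarith
  · rw [hρ]; linarith

theorem EuclideanSpace.norm_le_mul_add_of_forall {𝕜 ι : Type*} [RCLike 𝕜] [Fintype ι]
    {x y z : EuclideanSpace 𝕜 ι} {c : ℝ} (hc : 0 ≤ c)
    (h : ∀ i, ‖x i‖ ≤ c * (‖y i‖ + ‖z i‖)) : ‖x‖ ≤ c * (‖y‖ + ‖z‖) := by
  let N (v : EuclideanSpace 𝕜 ι) : EuclideanSpace ℝ ι := WithLp.toLp 2 fun i => ‖v i‖
  have hN (v : EuclideanSpace 𝕜 ι) : ‖N v‖ = ‖v‖ := by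
    simp only [EuclideanSpace.norm_eq, N, norm_norm]
  have hx : ‖x‖ ≤ ‖c • (N y + N z)‖ := by
    simp only [EuclideanSpace.norm_eq]
    gcongr with i
    simp only [N, PiLp.smul_apply, PiLp.add_apply, smul_eq_mul, Real.norm_eq_abs]
    exact (h i).trans (le_abs_self _)
  calc ‖x‖ ≤ ‖c • (N y + N z)‖ := hx
    _ ≤ c * (‖N y‖ + ‖N z‖) := by
        rw [norm_smul, Real.norm_of_nonneg hc]; gcongr; exact norm_add_le _ _
    _ = c * (‖y‖ + ‖z‖) := by rw [hN, hN]

section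

variable {n : Type*} [Fintype n]

theorem Matrix.isUnit_of_rank_eq_card [DecidableEq n] {K : Type*} [Field K] {A : Matrix n n K}
    (h : A.rank = Fintype.card n) : IsUnit A := by
  rw [← mulVec_surjective_iff_isUnit, ← Matrix.coe_mulVecLin, ← LinearMap.range_eq_top]
  apply Submodule.eq_top_of_finrank_eq
  rw [Module.finrank_fintype_fun_eq_card]
  exact h

theorem Matrix.isHermitian_mul_transpose_self (C : Matrix n n ℝ) : (C * Cᵀ).IsHermitian := by
  simpa using isHermitian_mul_conjTranspose_self C

theorem Matrix.IsHermitian.lamMin_le_eigenvalues [DecidableEq n] {A : Matrix n n ℝ}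
    (hA : A.IsHermitian) (i : n) : lamMin A ≤ hA.eigenvalues i := by
  rw [lamMin, hA.spectrum_real_eq_range_eigenvalues]
  exact csInf_le (Set.finite_range _).bddBelow ⟨i, rfl⟩

theorem Matrix.IsHermitian.eigenvalues_le_lamMax [DecidableEq n] {A : Matrix n n ℝ}
    (hA : A.IsHermitian) (i : n) : hA.eigenvalues i ≤ lamMax A := by
  rw [lamMax, hA.spectrum_real_eq_range_eigenvalues]
  exact le_csSup (Set.finite_range _).bddAbove ⟨i, rfl⟩

theorem Matrix.eigenvalues_mul_transpose_self_pos [DecidableEq n] {C : Matrix n n ℝ}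
    (hC : IsUnit C) (i : n) : 0 < (isHermitian_mul_transpose_self C).eigenvalues i :=
  (PosDef.mul_conjTranspose_self C (vecMul_injective_iff_isUnit.mpr hC)).eigenvalues_pos i

theorem Matrix.transpose_mem_orthogonalGroup [DecidableEq n] {U : Matrix n n ℝ}
    (hU : U ∈ orthogonalGroup n ℝ) : Uᵀ ∈ orthogonalGroup n ℝ :=
  Unitary.star_mem hU

theorem Matrix.norm_toEuclideanCLM_of_mem_orthogonalGroup [DecidableEq n] {U : Matrix n n ℝ}
    (hU : U ∈ orthogonalGroup n ℝ) (x : EuclideanSpace ℝ n) :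
    ‖toEuclideanCLM (𝕜 := ℝ) U x‖ = ‖x‖ :=
  ContinuousLinearMap.norm_map_of_mem_unitary (Unitary.map_mem _ hU) x

theorem Matrix.exists_orthogonal_svd [DecidableEq n] {C : Matrix n n ℝ} (hC : IsUnit C) :
    ∃ U ∈ orthogonalGroup n ℝ, ∃ V ∈ orthogonalGroup n ℝ,
      C = U * diagonal (fun i => √((isHermitian_mul_transpose_self C).eigenvalues i)) * Vᵀ := by
  set hH := isHermitian_mul_transpose_self C
  set d := hH.eigenvalues
  have hd : ∀ i, 0 < d i := eigenvalues_mul_transpose_self_pos hC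
  set U : Matrix n n ℝ := ↑hH.eigenvectorUnitary
  have hU : U ∈ orthogonalGroup n ℝ := hH.eigenvectorUnitary.2
  have hdiag : Uᵀ * (C * Cᵀ) * U = diagonal d := by
    simpa [Unitary.conjStarAlgAut_apply, star_eq_conjTranspose] using
      hH.conjStarAlgAut_star_eigenvectorUnitary
  set D := diagonal fun i => √(d i)
  set Dinv := diagonal fun i => (√(d i))⁻¹
  have hDDinv : D * Dinv = 1 := by
    simp [D, Dinv, diagonal_mul_diagonal, (Real.sqrt_pos.mpr (hd _)).ne']
  have hDinvD : Dinv * diagonal d * Dinv = 1 := by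
    rw [diagonal_mul_diagonal, diagonal_mul_diagonal, ← diagonal_one]
    congr 1 with i
    rw [mul_right_comm, ← mul_inv, ← sq, Real.sq_sqrt (hd i).le, inv_mul_cancel₀ (hd i).ne']
  have hDinvT : Dinvᵀ = Dinv := diagonal_transpose _
  -- `V = Cᵀ U Σ⁻¹` is orthogonal because `Uᵀ C Cᵀ U = Σ²`.
  refine ⟨U, hU, Cᵀ * U * Dinv, ?_, ?_⟩
  · rw [mem_orthogonalGroup_iff']
    simp only [transpose_mul, transpose_transpose, hDinvT]
    rw [← hDinvD, ← hdiag]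
    simp only [Matrix.mul_assoc]
  · simp only [transpose_mul, transpose_transpose, hDinvT]
    rw [Matrix.mul_assoc, ← Matrix.mul_assoc D, hDDinv, Matrix.one_mul, ← Matrix.mul_assoc,
      (mem_orthogonalGroup_iff n ℝ).mp hU, Matrix.one_mul]

def singularCoords [DecidableEq n] (U V : Matrix n n ℝ) (x y : EuclideanSpace ℝ n) :
    EuclideanSpace ℂ n :=
  WithLp.toLp 2 fun i => (toEuclideanCLM (𝕜 := ℝ) Uᵀ x i : ℂ) + toEuclideanCLM (𝕜 := ℝ) Vᵀ y i * I

theorem norm_singularCoords_sq [DecidableEq n] {U V : Matrix n n ℝ} (hU : U ∈ orthogonalGroup n ℝ)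
    (hV : V ∈ orthogonalGroup n ℝ) (x y : EuclideanSpace ℝ n) :
    ‖singularCoords U V x y‖ ^ 2 = ‖x‖ ^ 2 + ‖y‖ ^ 2 := by
  rw [← norm_toEuclideanCLM_of_mem_orthogonalGroup (transpose_mem_orthogonalGroup hU) x,
    ← norm_toEuclideanCLM_of_mem_orthogonalGroup (transpose_mem_orthogonalGroup hV) y]
  simp only [EuclideanSpace.norm_sq_eq, singularCoords, Complex.sq_norm, normSq_add_mul_I,
    Finset.sum_add_distrib, Real.norm_eq_abs, sq_abs]

section OMD

variable [DecidableEq n] (C : Matrix n n ℝ) (η : ℝ) (θ ω : ℕ → EuclideanSpace ℝ n)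
    (hθ : ∀ t, θ (t + 2) = θ (t + 1) - (2 * η) • toEuclideanCLM (𝕜 := ℝ) C (ω (t + 1))
      + η • toEuclideanCLM (𝕜 := ℝ) C (ω t))
    (hω : ∀ t, ω (t + 2) = ω (t + 1) + (2 * η) • toEuclideanCLM (𝕜 := ℝ) Cᵀ (θ (t + 1))
      - η • toEuclideanCLM (𝕜 := ℝ) Cᵀ (θ t))

include hθ hω in
theorem singularCoords_omd_recurrence {U V : Matrix n n ℝ} {σ : n → ℝ}
    (hU : U ∈ orthogonalGroup n ℝ) (hV : V ∈ orthogonalGroup n ℝ) (hC : C = U * diagonal σ * Vᵀ)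
    (i : n) (t : ℕ) :
    singularCoords U V (θ (t + 2)) (ω (t + 2)) i =
      (1 + 2 * ↑(η * σ i) * I) * singularCoords U V (θ (t + 1)) (ω (t + 1)) i
        - ↑(η * σ i) * I * singularCoords U V (θ t) (ω t) i := by
  have hUC (v : n → ℝ) : (Uᵀ *ᵥ C *ᵥ v) i = σ i * (Vᵀ *ᵥ v) i := by
    rw [mulVec_mulVec, hC, ← Matrix.mul_assoc, ← Matrix.mul_assoc,
      (mem_orthogonalGroup_iff' n ℝ).mp hU, Matrix.one_mul, ← mulVec_mulVec, mulVec_diagonal]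
  have hVC (v : n → ℝ) : (Vᵀ *ᵥ Cᵀ *ᵥ v) i = σ i * (Uᵀ *ᵥ v) i := by
    rw [mulVec_mulVec, hC, transpose_mul, transpose_mul, transpose_transpose, diagonal_transpose,
      ← Matrix.mul_assoc, ← Matrix.mul_assoc, (mem_orthogonalGroup_iff' n ℝ).mp hV,
      Matrix.one_mul, ← mulVec_mulVec, mulVec_diagonal]
  refine omd_recurrence_complex (α := η * σ i) (x := fun t => toEuclideanCLM (𝕜 := ℝ) Uᵀ (θ t) i)
    (y := fun t => toEuclideanCLM (𝕜 := ℝ) Vᵀ (ω t) i) (fun t => ?_) (fun t => ?_) t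
  · simp only [hθ, map_add, map_sub, map_smul, PiLp.add_apply, PiLp.sub_apply, PiLp.smul_apply,
      ofLp_toEuclideanCLM, hUC, smul_eq_mul]
    ring
  · simp only [hω, map_add, map_sub, map_smul, PiLp.add_apply, PiLp.sub_apply, PiLp.smul_apply,
      ofLp_toEuclideanCLM, hVC, smul_eq_mul]
    ring

end OMD

end

theorem stmt11 {p : ℕ} (C : Matrix (Fin p) (Fin p) ℝ) (hC : C.rank = p) (η r : ℝ)
    (hη : η = 1 / (2 * Real.sqrt (2 * lamMax (C * Cᵀ))))
    (θ ω : ℕ → EuclideanSpace ℝ (Fin p))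
    (hθ : ∀ t, θ (t + 2) = θ (t + 1) - (2 * η) • toEuclideanCLM (𝕜 := ℝ) C (ω (t + 1))
      + η • toEuclideanCLM (𝕜 := ℝ) C (ω t))
    (hω : ∀ t, ω (t + 2) = ω (t + 1) + (2 * η) • toEuclideanCLM (𝕜 := ℝ) Cᵀ (θ (t + 1))
      - η • toEuclideanCLM (𝕜 := ℝ) Cᵀ (θ t))
    (h0 : Real.sqrt (‖θ 0‖ ^ 2 + ‖ω 0‖ ^ 2) ≤ r)
    (h1 : Real.sqrt (‖θ 1‖ ^ 2 + ‖ω 1‖ ^ 2) ≤ r) :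
    ∀ t : ℕ, 1 ≤ t →
      Real.sqrt (‖θ t‖ ^ 2 + ‖ω t‖ ^ 2) ≤
        4 * Real.sqrt 2 * r *
          Real.exp (-((t : ℝ) / 16) * (lamMin (C * Cᵀ) / lamMax (C * Cᵀ))) := by
  intro t _
  have hCu : IsUnit C := isUnit_of_rank_eq_card (by rwa [Fintype.card_fin])
  obtain ⟨U, hU, V, hV, hsvd⟩ := exists_orthogonal_svd hCu
  set hH := isHermitian_mul_transpose_self C
  set ζ := fun u => singularCoords U V (θ u) (ω u)
  have hnorm (u : ℕ) : √(‖θ u‖ ^ 2 + ‖ω u‖ ^ 2) = ‖ζ u‖ := by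
    rw [← norm_singularCoords_sq hU hV, Real.sqrt_sq (norm_nonneg _)]
  set ρ := Real.exp (-(lamMin (C * Cᵀ) / lamMax (C * Cᵀ)) / 16)
  have hcoord (i : Fin p) : ‖ζ t i‖ ≤ 2 * √2 * ρ ^ t * (‖ζ 1 i‖ + ‖ζ 0 i‖) :=
    norm_le_exp_of_omd_recurrence (eigenvalues_mul_transpose_self_pos hCu i)
      (hH.lamMin_le_eigenvalues i) (hH.eigenvalues_le_lamMax i) hη (fun u => ζ u i)
      (singularCoords_omd_recurrence C η θ ω hθ hω hU hV hsvd i) t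
  have hρt : ρ ^ t = Real.exp (-((t : ℝ) / 16) * (lamMin (C * Cᵀ) / lamMax (C * Cᵀ))) := by
    rw [← Real.exp_nat_mul]; ring_nf
  calc √(‖θ t‖ ^ 2 + ‖ω t‖ ^ 2) = ‖ζ t‖ := hnorm t
    _ ≤ 2 * √2 * ρ ^ t * (‖ζ 1‖ + ‖ζ 0‖) :=
        EuclideanSpace.norm_le_mul_add_of_forall (by positivity) hcoord
    _ ≤ 2 * √2 * ρ ^ t * (r + r) := by rw [← hnorm, ← hnorm]; gcongr
    _ = 4 * √2 * r * ρ ^ t := by ring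
    _ = _ := by rw [hρt]
end
end
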